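/- arXiv:2603.19717 — 2 statements merged into one kernel-verified Lean document; each statement's English description precedes it below -/
import Mathlib

section
/- Let K be a cycle-free Markov kernel on a countable set G, F the CMT with kernel K (law ℙ_G), and Q_G = (Σ_{v∈G} δ_v) ⊗ ℙ_G. Then the tail branch σ-algebra coincides modulo Q_G with the pullback under π of the invariant path σ-algebra: (a) for every tail branch-property A ⊆ G × G^G there exists an invariant path property A' ⊆ G^ℕ with Q_G(A Δ π^{-1}(A')) = 0; and (b) for every invariant path property A', π^{-1}(A') is a tail branch-property. -/
/-!
Part (b) is deterministic. Shift invariance makes `π⁻¹ A'` constant along each component,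
since moving the root along an edge shifts its ancestor line by one step. If `f'` differs
from `f` at finitely many points and agrees with it on a common ancestral branch `B`, the
`f'`-ancestor line of `v` eventually enters `B`; from that point on it is also an `f`-ancestor
line, started in the `f`-component of `v`.

For part (a), fix a root `v` and an independent copy `g` of the CMT. Grafting `f` on the
ancestor line of `v` (and on a finite set `E`) onto `g` again gives a CMT, because the set
explored up to time `n` is a stopping set. Approximate `{f | (v, f) ∈ A}` by a set that depends
only on the coordinates in `E`. The tail branch property does not see whether `f` or `g` is used
on `E`, so `(v, f) ∈ A` almost surely does not change under the resampling. Hence it is almost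
surely a function of the ancestor line `π (v, f)`. Closing this path property under the shift
gives the invariant `A'`.
-/

open MeasureTheory ENNReal

namespace CMTPaper

variable {G : Type*}

/-- The `n`-step kernel of a Markov kernel `K` on a countable set `G`:
`K^0(x,·) = δ_x` and `K^{n+1}(x,A) = Σ_y K(x,{y})·K^n(y,A)`. -/
noncomputable def nStep [MeasurableSpace G] (K : G → Measure G) : ℕ → G → Measure G
  | 0 => fun x => Measure.dirac x
  | n + 1 => fun x => Measure.sum fun y => K x {y} • nStep K n y

/-- A kernel is cycle-free if `K^m(x,{x}) = 0` for every `x` and every `m ≥ 1`. -/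
def CycleFree [MeasurableSpace G] (K : G → Measure G) : Prop :=
  ∀ x : G, ∀ m : ℕ, 1 ≤ m → nStep K m x {x} = 0

/-- `P` is the law on path space `G^ℕ` of the Markov chain with kernel `K` started at `x`
(characterized by its finite-dimensional cylinder probabilities). -/
def IsPathLaw [MeasurableSpace G] (K : G → Measure G) (x : G) (P : Measure (ℕ → G)) : Prop :=
  ∀ (n : ℕ) (u : ℕ → G), u 0 = x →
    P {ω | ∀ i ≤ n, ω i = u i} = ∏ i ∈ Finset.range n, K (u i) {u (i + 1)}

/-- The set of collisions of two paths: pairs `(m,n)` with `m,n ≥ 1` and `ω m = ω' n`. -/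
def collisions (ω ω' : ℕ → G) : Set (ℕ × ℕ) :=
  {p : ℕ × ℕ | 1 ≤ p.1 ∧ 1 ≤ p.2 ∧ ω p.1 = ω' p.2}

/-- `μ` is the law on `G^G` of the coalescing Markov trajectories (CMT) with kernel `K`,
i.e. the product measure `⊗_x K(x,·)` (characterized on cylinders). -/
def IsCMTLaw [MeasurableSpace G] (K : G → Measure G) (μ : Measure (G → G)) : Prop :=
  ∀ (s : Finset G) (u : G → G), μ {f | ∀ x ∈ s, f x = u x} = ∏ x ∈ s, K x {u x}

/-- Adjacency in the graph of `f`: an edge between `x` and `f x` for every `x`. -/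
def Adj (f : G → G) (a b : G) : Prop := f a = b ∨ f b = a

/-- `a` and `b` lie in the same connected component of the graph of `f`. -/
def SameComponent (f : G → G) (a b : G) : Prop := Relation.ReflTransGen (Adj f) a b

/-- The connected component of `v` in the graph of `f`. -/
def component (f : G → G) (v : G) : Set G := {u | SameComponent f u v}

/-- The level set of `v`: points whose forward orbit merges with that of `v` after the same
number of steps. -/
def levelSet (f : G → G) (v : G) : Set G := {w | ∃ n : ℕ, f^[n] w = f^[n] v}

/-- The ancestor-line map `π (v, f) = (f^{(n)}(v))_{n ≥ 0}`. -/
def ancLine : G × (G → G) → ℕ → G := fun p n => p.2^[n] p.1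

/-- Total-variation distance between two measures on a countable discrete space. -/
noncomputable def tvDist [MeasurableSpace G] (ν₁ ν₂ : Measure G) : ℝ≥0∞ :=
  ∑' y : G, ((ν₁ {y} - ν₂ {y}) + (ν₂ {y} - ν₁ {y}))

/-- The mass `‖ν₁ ∧ ν₂‖ = Σ_y min(ν₁{y}, ν₂{y})` of the meet of two measures. -/
noncomputable def meetMass [MeasurableSpace G] (ν₁ ν₂ : Measure G) : ℝ≥0∞ :=
  ∑' y : G, min (ν₁ {y}) (ν₂ {y})

/-- The shift on path space, `σ (x_i)_{i≥0} = (x_{i+1})_{i≥0}`. -/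
def shift : (ℕ → G) → ℕ → G := fun ω i => ω (i + 1)

/-- An invariant path property: a measurable shift-invariant subset of path space. -/
def IsInvariantPathProperty [MeasurableSpace G] (A : Set (ℕ → G)) : Prop :=
  MeasurableSet A ∧ shift ⁻¹' A = A

/-- The tail σ-algebra `⋂_n σ((x_i)_{i ≥ n})` on path space. -/
def tailMS (G : Type*) [MeasurableSpace G] : MeasurableSpace (ℕ → G) :=
  ⨅ n : ℕ, MeasurableSpace.comap (fun ω : ℕ → G => fun i => ω (n + i)) inferInstance

/-- A tail path property: a set in the tail σ-algebra of path space. -/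
def IsTailPathProperty [MeasurableSpace G] (A : Set (ℕ → G)) : Prop :=
  MeasurableSet[tailMS G] A

/-- A function `h` is `K`-harmonic if `h(x) = Σ_y K(x,{y}) h(y)` for every `x`. -/
def IsKHarmonic [MeasurableSpace G] (K : G → Measure G) (h : G → ℝ) : Prop :=
  ∀ x : G, h x = ∑' y : G, (K x {y}).toReal * h y

/-- `K` has the Liouville property: every bounded `K`-harmonic function is constant. -/
def LiouvilleProperty [MeasurableSpace G] (K : G → Measure G) : Prop :=
  ∀ h : G → ℝ, (∃ C : ℝ, ∀ x, |h x| ≤ C) → IsKHarmonic K h → ∀ x y : G, h x = h y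

/-- Adjacency within a vertex subset `S` of the graph of `f`. -/
def AdjIn (f : G → G) (S : Set G) (a b : G) : Prop := Adj f a b ∧ a ∈ S ∧ b ∈ S

/-- The connected component of `a` in the subgraph of the graph of `f` induced by `S`. -/
def compIn (f : G → G) (S : Set G) (a : G) : Set G :=
  {b | Relation.ReflTransGen (AdjIn f S) a b}

/-- `B` is a branch of the component of `v`: a connected component of `C_f(v) ∖ U` for some
finite set `U` of vertices. -/
def IsBranch (f : G → G) (v : G) (B : Set G) : Prop :=
  ∃ U : Set G, U.Finite ∧ ∃ a ∈ component f v \ U, B = compIn f (component f v \ U) a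

/-- `B` is an ancestral branch of the component of `v`: a branch that eventually contains
the forward orbit of `v`. -/
def IsAncestralBranch (f : G → G) (v : G) (B : Set G) : Prop :=
  IsBranch f v B ∧ ∃ N : ℕ, ∀ n ≥ N, f^[n] v ∈ B

/-- `f` and `f'` share a common ancestral branch of the component of `v`, on which they
coincide. -/
def SharesAncestralBranch (v : G) (f f' : G → G) : Prop :=
  ∃ B : Set G, IsAncestralBranch f v B ∧ IsAncestralBranch f' v B ∧ Set.EqOn f f' B

/-- A component-property: a measurable subset of `G × G^G` invariant under moving the root
within its connected component. -/
def IsComponentProperty [MeasurableSpace G] (A : Set (G × (G → G))) : Prop :=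
  MeasurableSet A ∧
  ∀ (f : G → G) (v v' : G), SameComponent f v v' → ((v, f) ∈ A ↔ (v', f) ∈ A)

/-- A level-set-property: a measurable subset of `G × G^G` invariant under moving the root
within its level set. -/
def IsLevelSetProperty [MeasurableSpace G] (A : Set (G × (G → G))) : Prop :=
  MeasurableSet A ∧
  ∀ (f : G → G) (v v' : G), v' ∈ levelSet f v → ((v, f) ∈ A ↔ (v', f) ∈ A)

/-- A tail branch-property: a component-property insensitive to finite modifications that
preserve a common ancestral branch. -/
def IsTailBranchProperty [MeasurableSpace G] (A : Set (G × (G → G))) : Prop :=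
  IsComponentProperty A ∧
  ∀ (v : G) (f f' : G → G), {x | f x ≠ f' x}.Finite → SharesAncestralBranch v f f' →
    ((v, f) ∈ A ↔ (v, f') ∈ A)

/-- A tail level-set-property: a level-set-property insensitive to finite modifications that
modify the level set of the root at only finitely many points. -/
def IsTailLevelSetProperty [MeasurableSpace G] (A : Set (G × (G → G))) : Prop :=
  IsLevelSetProperty A ∧
  ∀ (v : G) (f f' : G → G), {x | f x ≠ f' x}.Finite →
    (symmDiff (levelSet f v) (levelSet f' v)).Finite →
    ((v, f) ∈ A ↔ (v, f') ∈ A)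

open Filter Set
open scoped symmDiff

section Components

variable {f f' : G → G} {v a : G} {S D B : Set G}

theorem sameComponent_iterate (f : G → G) (v : G) (n : ℕ) : SameComponent f (f^[n] v) v := by
  induction n with
  | zero => exact .refl
  | succ n ih => exact .head (Or.inr (f.iterate_succ_apply' n v).symm) ih

theorem compIn_subset (ha : a ∈ S) : compIn f S a ⊆ S := fun _ hb => by
  induction hb with
  | refl => exact ha
  | tail _ hbc _ => exact hbc.2.2

theorem compIn_congr (h : EqOn f f' S) (a : G) : compIn f S a = compIn f' S a := by
  have key : ∀ {f f' : G → G}, EqOn f f' S → compIn f S a ⊆ compIn f' S a :=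
    fun h _ hb => Relation.ReflTransGen.mono (fun x y ⟨hxy, hx, hy⟩ =>
      ⟨hxy.imp (fun e => (h hx).symm.trans e) (fun e => (h hy).symm.trans e), hx, hy⟩) _ _ hb
  exact (key h).antisymm (key h.symm)

theorem compIn_compl_eq (f : G → G) (v : G) (D : Set G) :
    compIn f Dᶜ v = compIn f (component f v \ D) v := by
  refine Subset.antisymm (fun b hb => ?_) fun b hb =>
    Relation.ReflTransGen.mono (fun x y ⟨hxy, hx, hy⟩ => ⟨hxy, hx.2, hy.2⟩) _ _ hb
  suffices b ∈ component f v ∧ b ∈ compIn f (component f v \ D) v from this.2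
  induction hb with
  | refl => exact ⟨.refl, .refl⟩
  | tail _ hbc ih =>
    have hc : _ ∈ component f v := Relation.ReflTransGen.head hbc.1.symm ih.1
    exact ⟨hc, ih.2.tail ⟨hbc.1, ⟨ih.1, hbc.2.1⟩, hc, hbc.2.2⟩⟩

theorem iterate_mem_compIn (h : ∀ n, f^[n] v ∈ S) (n : ℕ) : f^[n] v ∈ compIn f S v := by
  induction n with
  | zero => exact .refl
  | succ n ih => exact ih.tail ⟨Or.inl (f.iterate_succ_apply' n v).symm, h n, h (n + 1)⟩

theorem iterate_eq_of_forall_lt {n : ℕ} (h : ∀ k < n, f (f^[k] v) = f' (f^[k] v)) :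
    ∀ k ≤ n, f'^[k] v = f^[k] v := by
  intro k hk
  induction k with
  | zero => rfl
  | succ k ih =>
    rw [f.iterate_succ_apply', f'.iterate_succ_apply', ih (by omega), h k (by omega)]

theorem IsBranch.subset_component (h : IsBranch f v B) : B ⊆ component f v := by
  obtain ⟨U, -, a, ha, rfl⟩ := h
  exact (compIn_subset ha).trans sdiff_subset

theorem isAncestralBranch_compIn_compl (hD : D.Finite) (h : ∀ n, f^[n] v ∉ D) :
    IsAncestralBranch f v (compIn f Dᶜ v) :=
  ⟨⟨D, hD, v, ⟨.refl, h 0⟩, compIn_compl_eq f v D⟩, 0, fun n _ => iterate_mem_compIn h n⟩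

theorem sharesAncestralBranch_of_forall_apply_iterate_eq (hfin : {x | f x ≠ f' x}.Finite)
    (horb : ∀ n, f (f^[n] v) = f' (f^[n] v)) : SharesAncestralBranch v f f' := by
  set D := {x | f x ≠ f' x}
  have hD : ∀ n, f^[n] v ∉ D := fun n hn => hn (horb n)
  have hEq : EqOn f f' Dᶜ := fun x hx => not_not.1 hx
  have hD' : ∀ n, f'^[n] v ∉ D := fun n => by
    rw [iterate_eq_of_forall_lt (fun k _ => horb k) n le_rfl]; exact hD n
  refine ⟨compIn f Dᶜ v, isAncestralBranch_compIn_compl hfin hD, ?_,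
    hEq.mono (compIn_subset (hD 0))⟩
  rw [compIn_congr hEq]
  exact isAncestralBranch_compIn_compl hfin hD'

theorem IsTailBranchProperty.mem_iff_of_forall_apply_iterate_eq [MeasurableSpace G]
    {A : Set (G × (G → G))} (hA : IsTailBranchProperty A) (hfin : {x | f x ≠ f' x}.Finite)
    (horb : ∀ n, f (f^[n] v) = f' (f^[n] v)) : (v, f) ∈ A ↔ (v, f') ∈ A :=
  hA.2 v f f' hfin (sharesAncestralBranch_of_forall_apply_iterate_eq hfin horb)

end Components

section Measurability

variable [MeasurableSpace G] [MeasurableSingletonClass G] [Countable G]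

theorem measurable_iterate_apply (v : G) (n : ℕ) : Measurable fun f : G → G => f^[n] v := by
  induction n with
  | zero => exact measurable_const
  | succ n ih =>
    simp only [Function.iterate_succ_apply']
    exact (measurable_from_prod_countable_left (f := fun q : (G → G) × G => q.1 q.2)
      fun x => measurable_pi_apply x).comp (measurable_id.prodMk ih)

theorem measurable_ancLine : Measurable (ancLine : G × (G → G) → ℕ → G) :=
  measurable_pi_iff.2 fun n =>
    measurable_from_prod_countable_right fun v => measurable_iterate_apply v n

end Measurability

theorem measurable_shift [MeasurableSpace G] : Measurable (shift : (ℕ → G) → ℕ → G) :=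
  measurable_pi_iff.2 fun i => measurable_pi_apply (i + 1)

section AncestorLines

variable {f f' : G → G} {v : G} {A' : Set (ℕ → G)}

theorem shift_ancLine (f : G → G) (v : G) : shift (ancLine (v, f)) = ancLine (f v, f) :=
  funext fun n => f.iterate_succ_apply n v

theorem shift_iterate_ancLine (f : G → G) (v : G) (n : ℕ) :
    shift^[n] (ancLine (v, f)) = ancLine (f^[n] v, f) := by
  induction n generalizing v with
  | zero => rfl
  | succ n ih => rw [Function.iterate_succ_apply, shift_ancLine, ih, f.iterate_succ_apply]

theorem ancLine_mem_iff_of_sameComponent (hA' : shift ⁻¹' A' = A') {a b : G}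
    (h : SameComponent f a b) : ancLine (a, f) ∈ A' ↔ ancLine (b, f) ∈ A' := by
  have step : ∀ x, ancLine (x, f) ∈ A' ↔ ancLine (f x, f) ∈ A' := fun x => by
    rw [← shift_ancLine]; exact (Set.ext_iff.1 hA' _).symm
  induction h with
  | refl => rfl
  | tail _ hbc ih => exact ih.trans <| hbc.elim (· ▸ step _) (· ▸ (step _).symm)

theorem isTailBranchProperty_preimage_ancLine [MeasurableSpace G] [MeasurableSingletonClass G]
    [Countable G] (hA' : IsInvariantPathProperty A') :
    IsTailBranchProperty (ancLine ⁻¹' A') := by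
  obtain ⟨hm, hs⟩ := hA'
  refine ⟨⟨measurable_ancLine hm, fun f v v' h => ancLine_mem_iff_of_sameComponent hs h⟩, ?_⟩
  rintro v f f' - ⟨B, ⟨hBf, -⟩, ⟨-, N, hN⟩, hEq⟩
  set a := f'^[N] v
  have hpath : ancLine (a, f) = ancLine (a, f') := funext fun n =>
    iterate_eq_of_forall_lt (f := f') (fun k _ => (hEq <| by
      rw [← Function.iterate_add_apply]; exact hN _ (by omega)).symm) n le_rfl
  calc ancLine (v, f) ∈ A' ↔ ancLine (a, f) ∈ A' :=
        (ancLine_mem_iff_of_sameComponent hs (hBf.subset_component (hN N le_rfl))).symm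
    _ ↔ ancLine (a, f') ∈ A' := by rw [hpath]
    _ ↔ ancLine (v, f') ∈ A' :=
        ancLine_mem_iff_of_sameComponent hs (sameComponent_iterate f' v N)

def frequentlyShift (B : Set (ℕ → G)) : Set (ℕ → G) :=
  {ω | ∃ᶠ n in atTop, shift^[n] ω ∈ B}

theorem isInvariantPathProperty_frequentlyShift [MeasurableSpace G] {B : Set (ℕ → G)}
    (hB : MeasurableSet B) : IsInvariantPathProperty (frequentlyShift B) := by
  refine ⟨?_, ?_⟩
  · have : frequentlyShift B = ⋂ N : ℕ, ⋃ n ≥ N, shift^[n] ⁻¹' B := by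
      ext; simp [frequentlyShift, frequently_atTop]
    rw [this]
    exact .iInter fun N => .iUnion fun n => .iUnion fun _ => (measurable_shift.iterate n) hB
  · ext ω
    simp only [frequentlyShift, mem_preimage, mem_ofPred_eq, ← Function.iterate_succ_apply]
    conv_rhs => rw [← map_add_atTop_eq_nat 1, frequently_map]

theorem IsComponentProperty.ancLine_mem_frequentlyShift_iff [MeasurableSpace G]
    {A : Set (G × (G → G))} (hA : IsComponentProperty A) {B : Set (ℕ → G)}
    (hB : ∀ w, ancLine (w, f) ∈ B ↔ (w, f) ∈ A) (v : G) :
    ancLine (v, f) ∈ frequentlyShift B ↔ (v, f) ∈ A := by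
  simp only [frequentlyShift, mem_ofPred_eq, shift_iterate_ancLine, hB,
    hA.2 f _ v (sameComponent_iterate f v _), frequently_const]

end AncestorLines

theorem measure_eq_tsum_preimage_singleton_inter {α β : Type*} [MeasurableSpace α]
    [Countable β] (μ : Measure α) {Q : α → β} (hQ : ∀ b, MeasurableSet (Q ⁻¹' {b}))
    (S : Set α) : μ S = ∑' b, μ (Q ⁻¹' {b} ∩ S) :=
  calc μ S = μ.restrict S (⋃ b, Q ⁻¹' {b}) := by
        simp [← preimage_iUnion, iUnion_of_singleton]
    _ = ∑' b, μ.restrict S (Q ⁻¹' {b}) := measure_iUnion (pairwise_disjoint_fiber Q) hQ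
    _ = ∑' b, μ (Q ⁻¹' {b} ∩ S) := tsum_congr fun b => Measure.restrict_apply (hQ b)

theorem measure_preimage_symmDiff_le {α Ω : Type*} [MeasurableSpace α] [MeasurableSpace Ω]
    {ν : Measure Ω} {μ : Measure α} {Φ Ψ : Ω → α} (hΦ : Measurable Φ) (hΨ : Measurable Ψ)
    (hΦμ : ν.map Φ = μ) (hΨμ : ν.map Ψ = μ) {S C : Set α} (hC : Φ ⁻¹' C = Ψ ⁻¹' C) :
    ν ((Φ ⁻¹' S) ∆ (Ψ ⁻¹' S)) ≤ μ (S ∆ C) + μ (S ∆ C) :=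
  calc ν ((Φ ⁻¹' S) ∆ (Ψ ⁻¹' S)) ≤ ν (Φ ⁻¹' (S ∆ C) ∪ Ψ ⁻¹' (S ∆ C)) := by
        refine measure_mono ?_
        rw [preimage_symmDiff, preimage_symmDiff, hC, symmDiff_comm (Ψ ⁻¹' S)]
        exact symmDiff_triangle _ _ _
    _ ≤ ν (Φ ⁻¹' (S ∆ C)) + ν (Ψ ⁻¹' (S ∆ C)) := measure_union_le _ _
    _ ≤ μ (S ∆ C) + μ (S ∆ C) := by
        gcongr
        · exact hΦμ ▸ Measure.le_map_apply hΦ.aemeasurable _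
        · exact hΨμ ▸ Measure.le_map_apply hΨ.aemeasurable _

theorem count_prod_eq_zero_of_ae_notMem {α β : Type*} [MeasurableSpace α]
    [MeasurableSingletonClass α] [MeasurableSpace β] {μ : Measure β} [SFinite μ]
    {S : Set (α × β)} (hS : MeasurableSet S) (h : ∀ a, ∀ᵐ b ∂μ, (a, b) ∉ S) :
    (Measure.count.prod μ) S = 0 :=
  (Measure.measure_prod_null hS).2 <|
    Measure.ae_count_iff.2 fun a => measure_eq_zero_iff_ae_notMem.2 (h a)

def cyl (s : Finset G) (u : G → G) : Set (G → G) := {f | ∀ x ∈ s, f x = u x}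

def DeterminedBy (E : Finset G) (C : Set (G → G)) : Prop :=
  ∀ f g, (∀ x ∈ E, f x = g x) → f ∈ C → g ∈ C

theorem DeterminedBy.inter {E : Finset G} {C D : Set (G → G)} (hC : DeterminedBy E C)
    (hD : DeterminedBy E D) : DeterminedBy E (C ∩ D) :=
  fun f g h hf => ⟨hC f g h hf.1, hD f g h hf.2⟩

theorem determinedBy_cyl {E s : Finset G} (hs : s ⊆ E) (u : G → G) :
    DeterminedBy E (cyl s u) :=
  fun _ _ h hf x hx => (h x (hs hx)).symm.trans (hf x hx)

theorem isPiSystem_cyl : IsPiSystem {S : Set (G → G) | ∃ s u, S = cyl s u} := by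
  classical
  rintro _ ⟨s, u, rfl⟩ _ ⟨t, w, rfl⟩ ⟨f₀, hu, hw⟩
  refine ⟨s ∪ t, f₀, ?_⟩
  ext f
  simp only [cyl, mem_inter_iff, mem_ofPred_eq, Finset.mem_union] at hu hw ⊢
  grind

section Cylinders

variable [MeasurableSpace G] {K : G → Measure G} {μ : Measure (G → G)}

theorem IsCMTLaw.measure_cyl (hμ : IsCMTLaw K μ) (s : Finset G) (u : G → G) :
    μ (cyl s u) = ∏ x ∈ s, K x {u x} :=
  hμ s u

theorem IsCMTLaw.measure_cyl_inter_cyl (hμ : IsCMTLaw K μ) {r t : Finset G}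
    (hrt : Disjoint r t) (f u : G → G) : μ (cyl r f ∩ cyl t u) = μ (cyl r f) * μ (cyl t u) := by
  classical
  have : cyl r f ∩ cyl t u = cyl (r ∪ t) (r.piecewise f u) := by
    ext g
    simp only [cyl, mem_inter_iff, mem_ofPred_eq, Finset.mem_union]
    grind [Finset.piecewise_eq_of_mem, Finset.piecewise_eq_of_notMem, Finset.disjoint_left]
  rw [this, hμ.measure_cyl, hμ.measure_cyl, hμ.measure_cyl, Finset.prod_union hrt]
  congr 1 <;> refine Finset.prod_congr rfl fun x hx => ?_
  · rw [Finset.piecewise_eq_of_mem _ _ _ hx]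
  · rw [Finset.piecewise_eq_of_notMem _ _ _ (Finset.disjoint_right.1 hrt hx)]

variable [MeasurableSingletonClass G] [Countable G]

theorem measurableSet_cyl (s : Finset G) (u : G → G) : MeasurableSet (cyl s u) := by
  simp only [cyl, ofPred_forall]
  exact .iInter fun x => .iInter fun _ => measurable_pi_apply x (measurableSet_singleton _)

theorem DeterminedBy.measurableSet {E : Finset G} {C : Set (G → G)} (h : DeterminedBy E C) :
    MeasurableSet C := by
  have : C = E.restrict ⁻¹' (E.restrict '' C) := by
    refine (subset_preimage_image _ _).antisymm fun g ⟨f, hf, hfg⟩ => h f g (fun x hx => ?_) hf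
    exact congrFun hfg ⟨x, hx⟩
  rw [this]
  exact Finset.measurable_restrict E (to_countable _).measurableSet

theorem generateFrom_cyl :
    MeasurableSpace.generateFrom {S : Set (G → G) | ∃ s u, S = cyl s u} =
      MeasurableSpace.pi := by
  refine le_antisymm (MeasurableSpace.generateFrom_le ?_) (iSup_le fun x => ?_)
  · rintro _ ⟨s, u, rfl⟩
    exact measurableSet_cyl s u
  · refine (@measurable_to_countable' G (G → G) _ _ (MeasurableSpace.generateFrom _) _
      fun y => ?_).comap_le
    exact MeasurableSpace.measurableSet_generateFrom ⟨{x}, fun _ => y, by ext; simp [cyl]⟩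

theorem IsCMTLaw.unique {ν : Measure (G → G)} (hμ : IsCMTLaw K μ) (hν : IsCMTLaw K ν) :
    μ = ν := by
  have huniv : cyl (∅ : Finset G) id = univ := by ext; simp [cyl]
  have : IsProbabilityMeasure μ := ⟨by rw [← huniv, hμ.measure_cyl]; rfl⟩
  refine ext_of_generate_finite _ generateFrom_cyl.symm isPiSystem_cyl ?_ ?_
  · rintro _ ⟨s, u, rfl⟩
    rw [hμ.measure_cyl, hν.measure_cyl]
  · rw [← huniv, hμ.measure_cyl, hν.measure_cyl]

theorem IsCMTLaw.measure_inter_cyl (hμ : IsCMTLaw K μ) {r t : Finset G} {C : Set (G → G)}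
    (hC : DeterminedBy r C) (hrt : Disjoint r t) (u : G → G) :
    μ (C ∩ cyl t u) = μ C * μ (cyl t u) := by
  have hlev (w : r → G) : MeasurableSet (r.restrict ⁻¹' ({w} : Set (r → G))) :=
    Finset.measurable_restrict (X := fun _ : G => G) r (measurableSet_singleton w)
  rw [measure_eq_tsum_preimage_singleton_inter μ hlev,
    measure_eq_tsum_preimage_singleton_inter μ hlev C, ← ENNReal.tsum_mul_right]
  refine tsum_congr fun w => ?_
  rcases (r.restrict ⁻¹' ({w} : Set (r → G)) ∩ C).eq_empty_or_nonempty with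
    hw | ⟨f₀, hf₀w, hf₀C⟩
  · rw [← inter_assoc, hw, empty_inter, measure_empty, zero_mul]
  have hcyl : r.restrict ⁻¹' ({w} : Set (r → G)) = cyl r f₀ := by
    obtain rfl : r.restrict f₀ = w := hf₀w
    ext f
    simp [cyl, funext_iff]
  have hsub : cyl r f₀ ⊆ C := fun f hf => hC f₀ f (fun x hx => (hf x hx).symm) hf₀C
  rw [hcyl, ← inter_assoc, inter_eq_left.2 hsub, hμ.measure_cyl_inter_cyl hrt]

end Cylinders

def IsStoppingSet (R : (G → G) → Finset G) : Prop :=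
  ∀ f f', (∀ x ∈ R f, f x = f' x) → R f' = R f

theorem IsStoppingSet.determinedBy_level {R : (G → G) → Finset G} (hR : IsStoppingSet R)
    (r : Finset G) : DeterminedBy r (R ⁻¹' {r}) :=
  fun f g h (hf : R f = r) => (hR f g (hf ▸ h)).trans hf

open scoped Classical in
noncomputable def graftOn (R : (G → G) → Set G) (p : (G → G) × (G → G)) : G → G :=
  (R p.1).piecewise p.1 p.2

section Grafting

variable {R R' : (G → G) → Set G} {p : (G → G) × (G → G)} {v x : G}

theorem graftOn_apply_of_mem (hx : x ∈ R p.1) : graftOn R p x = p.1 x := by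
  simp [graftOn, hx]

theorem graftOn_apply_of_notMem (hx : x ∉ R p.1) : graftOn R p x = p.2 x := by
  simp [graftOn, hx]

theorem graftOn_apply_congr (h : x ∈ R p.1 ↔ x ∈ R' p.1) : graftOn R p x = graftOn R' p x := by
  by_cases hx : x ∈ R p.1
  · rw [graftOn_apply_of_mem hx, graftOn_apply_of_mem (h.1 hx)]
  · rw [graftOn_apply_of_notMem hx, graftOn_apply_of_notMem (mt h.2 hx)]

theorem measurable_graftOn [MeasurableSpace G] (hR : ∀ x, MeasurableSet {f | x ∈ R f}) :
    Measurable (graftOn R) :=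
  measurable_pi_iff.2 fun x => Measurable.ite (measurable_fst (hR x))
    ((measurable_pi_apply x).comp measurable_fst) ((measurable_pi_apply x).comp measurable_snd)

noncomputable def graft (E : Finset G) (v : G) : (G → G) × (G → G) → G → G :=
  graftOn fun f => ↑E ∪ range fun n => f^[n] v

theorem graft_apply_of_mem {E : Finset G} (hx : x ∈ E) : graft E v p x = p.1 x :=
  graftOn_apply_of_mem (Or.inl hx)

theorem graft_apply_of_notMem {E : Finset G} (hxE : x ∉ E) (hx : ∀ n, p.1^[n] v ≠ x) :
    graft E v p x = p.2 x :=
  graftOn_apply_of_notMem fun h => h.elim hxE fun ⟨n, hn⟩ => hx n hn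

theorem graft_apply_iterate (E : Finset G) (v : G) (p : (G → G) × (G → G)) (n : ℕ) :
    graft E v p (p.1^[n] v) = p.1 (p.1^[n] v) :=
  graftOn_apply_of_mem (Or.inr ⟨n, rfl⟩)

theorem iterate_graft_apply (E : Finset G) (v : G) (p : (G → G) × (G → G)) (n : ℕ) :
    (graft E v p)^[n] v = p.1^[n] v :=
  iterate_eq_of_forall_lt (fun k _ => (graft_apply_iterate E v p k).symm) n le_rfl

open scoped Classical in
noncomputable def explored (E : Finset G) (v : G) (n : ℕ) (f : G → G) : Finset G :=
  E ∪ (Finset.range (n + 1)).image fun k => f^[k] v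

theorem isStoppingSet_explored (E : Finset G) (v : G) (n : ℕ) :
    IsStoppingSet (explored E v n) := by
  classical
  intro f f' h
  have horb := iterate_eq_of_forall_lt (n := n) fun k hk =>
    h _ (Finset.mem_union_right _ (Finset.mem_image_of_mem _ (Finset.mem_range.2 (by omega))))
  simp only [explored]
  congr 1
  exact Finset.image_congr fun k hk => horb k (by simpa [Nat.lt_succ_iff] using hk)

theorem eventually_mem_explored_iff (E : Finset G) (v : G) (f : G → G) (x : G) :
    ∀ᶠ n in atTop, x ∈ explored E v n f ↔ x ∈ (↑E ∪ range fun n => f^[n] v) := by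
  by_cases hx : x ∈ E ∨ ∃ k, f^[k] v = x
  · obtain hx | ⟨k, rfl⟩ := hx
    · exact .of_forall fun n => by simp [explored, hx]
    · filter_upwards [eventually_ge_atTop k] with n hn
      simp only [explored, Finset.mem_union, Finset.mem_image, Finset.mem_range, mem_union,
        Finset.mem_coe, mem_range, exists_apply_eq_apply, or_true, iff_true]
      exact .inr ⟨k, by omega, rfl⟩
  · simp only [not_or, not_exists] at hx
    exact .of_forall fun n => by simp [explored, hx.1, hx.2]

variable [MeasurableSpace G] [MeasurableSingletonClass G] [Countable G]
  {K : G → Measure G} {μ : Measure (G → G)}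

theorem IsStoppingSet.measurable_graftOn {R : (G → G) → Finset G} (hR : IsStoppingSet R) :
    Measurable (graftOn fun f => (R f : Set G)) := by
  refine CMTPaper.measurable_graftOn fun x => ?_
  have : {f | x ∈ (R f : Set G)} = ⋃ r ∈ {r : Finset G | x ∈ r}, R ⁻¹' {r} := by
    ext f; simp
  rw [this]
  exact .biUnion (to_countable _) fun r _ => (hR.determinedBy_level r).measurableSet

theorem measurable_graft (E : Finset G) (v : G) : Measurable (graft E v) := by
  refine measurable_graftOn fun x => ?_
  have : {f : G → G | x ∈ (↑E ∪ range fun n => f^[n] v)} =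
      {_f | x ∈ E} ∪ ⋃ n, (fun f : G → G => f^[n] v) ⁻¹' {x} := by
    ext f; simp
  rw [this]
  exact .union (.const _)
    (.iUnion fun n => measurable_iterate_apply v n (measurableSet_singleton x))

/-- On `{R p.1 = r}` the grafted map is `p.1` on `r` and `p.2` off `r`. As `{R = r}` only
depends on the coordinates in `r`, independence of disjoint blocks of coordinates turns the
product `μ ⊗ μ` back into `μ`. -/
theorem IsCMTLaw.measure_graftOn_preimage_cyl [SFinite μ] (hμ : IsCMTLaw K μ)
    {R : (G → G) → Finset G} (hR : IsStoppingSet R) (s : Finset G) (u : G → G) :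
    (μ.prod μ) (graftOn (fun f => (R f : Set G)) ⁻¹' cyl s u) = μ (cyl s u) := by
  classical
  have hlev (r : Finset G) : MeasurableSet (R ⁻¹' {r}) := (hR.determinedBy_level r).measurableSet
  rw [measure_eq_tsum_preimage_singleton_inter (Q := fun p : (G → G) × (G → G) => R p.1) _
      fun r => measurable_fst (hlev r),
    measure_eq_tsum_preimage_singleton_inter μ hlev]
  refine tsum_congr fun r => ?_
  have hslice : (fun p : (G → G) × (G → G) => R p.1) ⁻¹' {r} ∩
      graftOn (fun f => (R f : Set G)) ⁻¹' cyl s u =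
      (R ⁻¹' {r} ∩ cyl (s ∩ r) u) ×ˢ cyl (s \ r) u := by
    ext ⟨f, g⟩
    simp only [mem_inter_iff, mem_preimage, mem_singleton_iff, mem_prod, cyl, mem_ofPred_eq,
      Finset.mem_inter, Finset.mem_sdiff]
    constructor
    · rintro ⟨rfl, h⟩
      exact ⟨⟨rfl, fun x hx => (graftOn_apply_of_mem hx.2).symm.trans (h x hx.1)⟩,
        fun x hx => (graftOn_apply_of_notMem hx.2).symm.trans (h x hx.1)⟩
    · rintro ⟨⟨rfl, h₁⟩, h₂⟩
      refine ⟨rfl, fun x hx => ?_⟩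
      by_cases hxr : x ∈ R f
      · exact (graftOn_apply_of_mem hxr).trans (h₁ x ⟨hx, hxr⟩)
      · exact (graftOn_apply_of_notMem hxr).trans (h₂ x ⟨hx, hxr⟩)
  have hsplit : cyl s u = cyl (s ∩ r) u ∩ cyl (s \ r) u := by
    ext f
    simp only [cyl, mem_inter_iff, mem_ofPred_eq, Finset.mem_inter, Finset.mem_sdiff]
    grind
  rw [hslice, Measure.prod_prod, hsplit, ← inter_assoc, hμ.measure_inter_cyl
    ((hR.determinedBy_level r).inter (determinedBy_cyl Finset.inter_subset_right u))
    Finset.disjoint_sdiff]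

/-- `graft E v` is the pointwise limit of the grafts along the stopping sets `explored E v n`. -/
theorem IsCMTLaw.measure_graft_preimage_cyl [IsFiniteMeasure μ] (hμ : IsCMTLaw K μ)
    (E : Finset G) (v : G) (s : Finset G) (u : G → G) :
    (μ.prod μ) (graft E v ⁻¹' cyl s u) = μ (cyl s u) := by
  set Rn : ℕ → (G → G) → Set G := fun n f => explored E v n f
  have hlim : ∀ p, ∀ᶠ n in atTop, p ∈ graftOn (Rn n) ⁻¹' cyl s u ↔ p ∈ graft E v ⁻¹' cyl s u := by
    intro p
    have : ∀ᶠ n in atTop, ∀ x ∈ s, graftOn (Rn n) p x = graft E v p x :=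
      s.eventually_all.2 fun x _ =>
        (eventually_mem_explored_iff E v p.1 x).mono fun n hn => graftOn_apply_congr hn
    filter_upwards [this] with n hn
    simp only [mem_preimage, cyl, mem_ofPred_eq]
    exact forall₂_congr fun x hx => by rw [hn x hx]
  refine tendsto_nhds_unique (tendsto_measure_of_tendsto_indicator_of_isFiniteMeasure _
    (μ.prod μ) (fun n => (isStoppingSet_explored E v n).measurable_graftOn
      (measurableSet_cyl s u)) hlim) ?_
  simp only [hμ.measure_graftOn_preimage_cyl (isStoppingSet_explored E v _)]
  exact tendsto_const_nhds

theorem IsCMTLaw.map_graft [IsFiniteMeasure μ] (hμ : IsCMTLaw K μ) (E : Finset G) (v : G) :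
    (μ.prod μ).map (graft E v) = μ :=
  Eq.symm <| hμ.unique fun s u => by
    change (μ.prod μ).map (graft E v) (cyl s u) = _
    rw [Measure.map_apply (measurable_graft E v) (measurableSet_cyl s u),
      hμ.measure_graft_preimage_cyl, hμ.measure_cyl]

end Grafting

open scoped Classical in
noncomputable def pathFill (ω : ℕ → G) (g : G → G) : G → G :=
  fun x => if h : ∃ n, ω n = x then ω (Nat.find h + 1) else g x

theorem pathFill_ancLine (v : G) (f g : G → G) :
    pathFill (ancLine (v, f)) g = graft ∅ v (f, g) := by
  classical
  funext x
  by_cases h : ∃ n, ancLine (v, f) n = x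
  · have hm : f^[Nat.find h] v = x := Nat.find_spec h
    rw [pathFill, dif_pos h]
    conv_rhs => rw [← hm, graft_apply_iterate]
    exact f.iterate_succ_apply' _ v
  · rw [pathFill, dif_neg h,
      graft_apply_of_notMem (p := (f, g)) (Finset.notMem_empty x) fun n hn => h ⟨n, hn⟩]

theorem measurable_pathFill [MeasurableSpace G] [MeasurableSingletonClass G] :
    Measurable fun q : (ℕ → G) × (G → G) => pathFill q.1 q.2 := by
  classical
  have hev (k : ℕ) : Measurable fun q : (ℕ → G) × (G → G) => q.1 k :=
    (measurable_pi_apply k).comp measurable_fst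
  refine measurable_pi_iff.2 fun x => ?_
  have hs : MeasurableSet {q : (ℕ → G) × (G → G) | ∃ n, q.1 n = x} := by
    simp only [ofPred_exists]
    exact .iUnion fun n => hev n (measurableSet_singleton x)
  have hfind : Measurable fun q : {q : (ℕ → G) × (G → G) // ∃ n, q.1 n = x} => Nat.find q.2 :=
    measurable_find _ fun k => measurable_subtype_coe (hev k (measurableSet_singleton x))
  refine Measurable.dite (s := {q : (ℕ → G) × (G → G) | ∃ n, q.1 n = x})
    (f := fun q => q.1.1 (Nat.find q.2 + 1)) (g := fun q => q.1.2 x) ?_ ?_ hs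
  · exact (measurable_from_prod_countable_left (f := fun q : (ℕ → G) × ℕ => q.1 (q.2 + 1))
      fun n => measurable_pi_apply (n + 1)).comp
        ((measurable_fst.comp measurable_subtype_coe).prodMk hfind)
  · exact (measurable_pi_apply x).comp (measurable_snd.comp measurable_subtype_coe)

/-- By `pathFill_ancLine`, `π (v, f) ∈ fillProperty A μ` says that `(v, ·) ∈ A` holds almost
surely given the ancestor line of `v`. -/
def fillProperty [MeasurableSpace G] (A : Set (G × (G → G))) (μ : Measure (G → G)) :
    Set (ℕ → G) :=
  {ω | ∀ᵐ g ∂μ, (ω 0, pathFill ω g) ∈ A}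

theorem measurableSet_fillProperty [MeasurableSpace G] [MeasurableSingletonClass G]
    {μ : Measure (G → G)} [SFinite μ] {A : Set (G × (G → G))} (hA : MeasurableSet A) :
    MeasurableSet (fillProperty A μ) := by
  have : fillProperty A μ = (fun ω => μ {g | (ω 0, pathFill ω g) ∈ Aᶜ}) ⁻¹' {0} := by
    ext ω; simp [fillProperty, ae_iff]
  rw [this]
  exact measurable_measure_prodMk_left (((measurable_pi_apply 0).comp measurable_fst).prodMk
    measurable_pathFill hA.compl) (measurableSet_singleton 0)

section Conditioning

variable [MeasurableSpace G] [MeasurableSingletonClass G] [Countable G]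
  {K : G → Measure G} {μ : Measure (G → G)} [IsProbabilityMeasure μ]

/-- Approximate `S` by a cylinder over some finite `E`: `Prod.fst` and `graft E v` agree on `E`
and both have law `μ`. -/
theorem IsCMTLaw.fst_preimage_ae_eq_graft_preimage (hμ : IsCMTLaw K μ) {v : G}
    {S : Set (G → G)} (hS : MeasurableSet S) (hSv : ∀ E, graft E v ⁻¹' S = graft ∅ v ⁻¹' S) :
    Prod.fst ⁻¹' S =ᵐ[μ.prod μ] graft ∅ v ⁻¹' S := by
  refine measure_symmDiff_eq_zero_iff.1 <| nonpos_iff_eq_zero.1 <|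
    ENNReal.le_of_forall_pos_le_add fun ε hε _ => ?_
  obtain ⟨t, ht, htS⟩ := exists_measure_symmDiff_lt_of_generateFrom_isSetRing (μ := μ)
    isSetRing_measurableCylinders ⟨{univ}, countable_singleton _,
      singleton_subset_iff.2 (univ_mem_measurableCylinders _), by simp⟩
    generateFrom_measurableCylinders.symm hS (ENNReal.half_pos (ENNReal.coe_ne_zero.2 hε.ne'))
  obtain ⟨E, D, -, rfl⟩ := (mem_measurableCylinders t).1 ht
  have hagree : Prod.fst ⁻¹' cylinder E D = graft E v ⁻¹' cylinder E D := by
    ext p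
    simp only [mem_preimage, mem_cylinder]
    congr! 1
    funext x
    exact (graft_apply_of_mem x.2).symm
  calc (μ.prod μ) ((Prod.fst ⁻¹' S) ∆ (graft ∅ v ⁻¹' S))
      = (μ.prod μ) ((Prod.fst ⁻¹' S) ∆ (graft E v ⁻¹' S)) := by rw [hSv E]
    _ ≤ μ (S ∆ cylinder E D) + μ (S ∆ cylinder E D) :=
        measure_preimage_symmDiff_le measurable_fst (measurable_graft E v) (by simp)
          (hμ.map_graft E v) hagree
    _ ≤ 0 + ε := by
        rw [zero_add, symmDiff_comm, ← ENNReal.add_halves (ε : ℝ≥0∞)]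
        gcongr

theorem IsTailBranchProperty.ae_mem_iff_graft_mem (hμ : IsCMTLaw K μ)
    {A : Set (G × (G → G))} (hA : IsTailBranchProperty A) (v : G) :
    ∀ᵐ p ∂μ.prod μ, (v, p.1) ∈ A ↔ (v, graft ∅ v p) ∈ A := by
  refine EventuallyEq.mem_iff <|
    hμ.fst_preimage_ae_eq_graft_preimage (measurable_prodMk_left hA.1.1) fun E => ?_
  ext p
  refine (hA.mem_iff_of_forall_apply_iterate_eq ?_ fun n => ?_).symm
  · refine E.finite_toSet.subset fun x hx => ?_
    by_contra hxE
    refine hx (graftOn_apply_congr ?_)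
    simp [hxE]
  · rw [iterate_graft_apply, graft_apply_iterate, graft_apply_iterate]

theorem IsTailBranchProperty.ae_ancLine_mem_fillProperty_iff (hμ : IsCMTLaw K μ)
    {A : Set (G × (G → G))} (hA : IsTailBranchProperty A) (v : G) :
    ∀ᵐ f ∂μ, ancLine (v, f) ∈ fillProperty A μ ↔ (v, f) ∈ A := by
  filter_upwards [Measure.ae_ae_of_ae_prod (hA.ae_mem_iff_graft_mem hμ v)] with f hf
  simp only [fillProperty, mem_ofPred_eq, pathFill_ancLine]
  exact (eventually_congr hf).symm.trans eventually_const

end Conditioning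

theorem tail_branch_eq_invariant_path_mod_Q_general
    [Countable G] [MeasurableSpace G] [MeasurableSingletonClass G]
    (K : G → Measure G)
    (μ : Measure (G → G)) [IsProbabilityMeasure μ] (hμ : IsCMTLaw K μ) :
    (∀ A : Set (G × (G → G)), IsTailBranchProperty A →
      ∃ A' : Set (ℕ → G), IsInvariantPathProperty A' ∧
        ((Measure.count : Measure G).prod μ) (symmDiff A (ancLine ⁻¹' A')) = 0) ∧
    (∀ A' : Set (ℕ → G), IsInvariantPathProperty A' →
      IsTailBranchProperty (ancLine ⁻¹' A')) := by
  refine ⟨fun A hA => ?_, fun A' hA' => isTailBranchProperty_preimage_ancLine hA'⟩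
  have hB := measurableSet_fillProperty (μ := μ) hA.1.1
  refine ⟨frequentlyShift (fillProperty A μ), isInvariantPathProperty_frequentlyShift hB, ?_⟩
  have hae : ∀ᵐ f ∂μ, ∀ w, ancLine (w, f) ∈ fillProperty A μ ↔ (w, f) ∈ A :=
    ae_all_iff.2 fun w => hA.ae_ancLine_mem_fillProperty_iff hμ w
  refine count_prod_eq_zero_of_ae_notMem (hA.1.1.symmDiff (measurable_ancLine
    (isInvariantPathProperty_frequentlyShift hB).1)) fun v => ?_
  filter_upwards [hae] with f hf
  simp [mem_symmDiff, hA.1.ancLine_mem_frequentlyShift_iff hf v]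

/-- For a cycle-free CMT, the tail branch σ-algebra coincides modulo
`Q_G = (Σ_v δ_v) ⊗ ℙ_G` with the pullback under the ancestor-line map of the invariant path
σ-algebra. -/
theorem tail_branch_eq_invariant_path_mod_Q
    [Countable G] [MeasurableSpace G] [MeasurableSingletonClass G]
    (K : G → Measure G) (hK : ∀ x, IsProbabilityMeasure (K x)) (hcf : CycleFree K)
    (μ : Measure (G → G)) [IsProbabilityMeasure μ] (hμ : IsCMTLaw K μ) :
    (∀ A : Set (G × (G → G)), IsTailBranchProperty A →
      ∃ A' : Set (ℕ → G), IsInvariantPathProperty A' ∧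
        ((Measure.count : Measure G).prod μ) (symmDiff A (ancLine ⁻¹' A')) = 0) ∧
    (∀ A' : Set (ℕ → G), IsInvariantPathProperty A' →
      IsTailBranchProperty (ancLine ⁻¹' A')) :=
  tail_branch_eq_invariant_path_mod_Q_general K μ hμ

end CMTPaper
end

section
/- Let K be a cycle-free Markov kernel on a countable set G such that: (a) the graph on vertex set G with edge set {(u,v) : K(u,{v}) + K(v,{u}) > 0} is connected (weak irreducibility); (b) for every u ∈ G and every integer d₀ ≥ 1 there exist n ≥ 1 and y ∈ G with K^n(u,{y}) > 0 and K^{n+d₀}(u,{y}) > 0; (c) ℙ_G-almost surely the graph of the CMT F with kernel K is locally finite and every level set of F is infinite. Then the graph on vertex set G with edge set {(u,v) : ℙ_G({f : v ∈ L_f(u)}) > 0} is connected. -/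
open MeasureTheory ENNReal

namespace CMTPaper

variable {G : Type*}

/-!
If `K(u,{v}) > 0`, aperiodicity at `v` gives `y` and `N` such that both `u` and `v` reach `y` in
exactly `N` steps with positive probability. Take a realisation `f` of the CMT which is locally
finite, has infinite level sets, only takes positive-probability steps and sends `u` to `y` in `N`
steps. Since the level set of `u` is infinite while the graph is locally finite, it contains a
point `m` whose orbit merges with that of `u` at a time `s ≥ N` and avoids a given path `c` from
`v` to `y` until then. The map `f` forces `m ∈ L(u)`; rerouting `f` along `c` forces `v ∈ L(m)`,
because `v` then reaches `y` at time `N` and follows the orbit of `u` up to time `s`. Each of these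
finite configurations has positive probability, so `u` and `v` are joined through `m`, and weak
irreducibility connects everything along such kernel edges.
-/

lemma mem_levelSet_comm {f : G → G} {a b : G} : b ∈ levelSet f a ↔ a ∈ levelSet f b :=
  ⟨fun ⟨n, h⟩ => ⟨n, h.symm⟩, fun ⟨n, h⟩ => ⟨n, h.symm⟩⟩

lemma iterate_eq_of_apply_eq_succ {f : G → G} {c : ℕ → G} {N : ℕ}
    (h : ∀ j < N, f (c j) = c (j + 1)) : ∀ j ≤ N, f^[j] (c 0) = c j := by
  intro j hj
  induction j with
  | zero => rfl
  | succ j ih => rw [Function.iterate_succ_apply', ih (by omega), h j (by omega)]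

noncomputable def splice (c : ℕ → G) (N : ℕ) (f : G → G) : G → G :=
  Function.extend (fun j : Fin N => c j) (fun j => c (j + 1)) f

lemma splice_apply_of_lt {c : ℕ → G} {N : ℕ} (hc : Set.InjOn c (Set.Iic N)) (f : G → G)
    {j : ℕ} (hj : j < N) : splice c N f (c j) = c (j + 1) := by
  have hinj : Function.Injective fun j : Fin N => c j := fun a b h =>
    Fin.ext (hc (Set.mem_Iic.mpr a.2.le) (Set.mem_Iic.mpr b.2.le) h)
  exact hinj.extend_apply _ f ⟨j, hj⟩

lemma splice_apply_of_forall_ne {c : ℕ → G} {N : ℕ} (f : G → G) {x : G}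
    (hx : ∀ j < N, c j ≠ x) : splice c N f x = f x :=
  Function.extend_apply' _ _ _ fun ⟨j, hj⟩ => hx j j.2 hj

lemma finite_setOf_iterate_eq {f : G → G} (hf : ∀ x, {y | f y = x}.Finite) (k : ℕ) (x : G) :
    {m | f^[k] m = x}.Finite := by
  induction k generalizing x with
  | zero => simp
  | succ k ih => exact (ih x).preimage' fun q _ => hf q

lemma finite_setOf_visits_before_merging {f : G → G} (hf : ∀ x, {y | f y = x}.Finite) {u : G}
    (hu : Function.Injective fun i => f^[i] u) (p : G) :
    {m | ∃ r σ, r ≤ σ ∧ f^[r] m = p ∧ f^[σ] m = f^[σ] u}.Finite := by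
  rcases Set.eq_empty_or_nonempty {m | ∃ r σ, r ≤ σ ∧ f^[r] m = p ∧ f^[σ] m = f^[σ] u} with
    h | ⟨_, r₀, σ₀, hrσ₀, hr₀, hσ₀⟩
  · rw [h]
    exact Set.finite_empty
  -- the delay `σ - r` after which `p` joins the orbit of `u` determines `r`
  have delay : ∀ {m r σ}, r ≤ σ → f^[r] m = p → f^[σ] m = f^[σ] u → f^[σ - r] p = f^[σ] u := by
    intro m r σ hrσ hr hσ
    rw [← hr, ← Function.iterate_add_apply, Nat.sub_add_cancel hrσ, hσ]
  refine (finite_setOf_iterate_eq hf r₀ p).subset ?_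
  rintro m ⟨r, σ, hrσ, hr, hσ⟩
  have : σ₀ - r₀ + σ = σ - r + σ₀ := hu <|
    calc f^[σ₀ - r₀ + σ] u = f^[σ₀ - r₀] (f^[σ - r] p) := by
          rw [Function.iterate_add_apply, delay hrσ hr hσ]
      _ = f^[σ - r] (f^[σ₀ - r₀] p) := (Function.Commute.iterate_iterate_self f _ _).eq p
      _ = f^[σ - r + σ₀] u := by rw [delay hrσ₀ hr₀ hσ₀, Function.iterate_add_apply]
  rwa [show r = r₀ by omega] at hr

lemma exists_merging_avoiding {f : G → G} (hf : ∀ x, {y | f y = x}.Finite) {u : G}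
    (hL : (levelSet f u).Infinite) (hu : Function.Injective fun i => f^[i] u) {P : Set G}
    (hP : P.Finite) (N : ℕ) : ∃ m s, N ≤ s ∧ f^[s] m = f^[s] u ∧ ∀ i < s, f^[i] m ∉ P := by
  have hearly : (⋃ σ ∈ Set.Iio N, {m | f^[σ] m = f^[σ] u}).Finite :=
    (Set.finite_Iio N).biUnion fun σ _ => finite_setOf_iterate_eq hf σ _
  have hvisit : (⋃ p ∈ P, {m | ∃ r σ, r ≤ σ ∧ f^[r] m = p ∧ f^[σ] m = f^[σ] u}).Finite :=
    hP.biUnion fun p _ => finite_setOf_visits_before_merging hf hu p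
  obtain ⟨m, ⟨s, hs⟩, hm⟩ := (hL.sdiff (hearly.union hvisit)).nonempty
  simp only [Set.mem_union, Set.mem_iUnion, Set.mem_ofPred_eq, not_or, not_exists] at hm
  refine ⟨m, s, ?_, hs, fun i hi hiP => hm.2 _ hiP i s ⟨hi.le, rfl, hs⟩⟩
  by_contra! h
  exact hm.1 s h hs

section LevelSetGraph

variable [MeasurableSpace G] {K : G → Measure G} {μ : Measure (G → G)}

def IsKPath (K : G → Measure G) (c : ℕ → G) (N : ℕ) : Prop :=
  ∀ i < N, K (c i) {c (i + 1)} ≠ 0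

def Admissible (K : G → Measure G) (f : G → G) : Prop :=
  ∀ x, K x {f x} ≠ 0

lemma Admissible.isKPath_iterate {f : G → G} (hf : Admissible K f) (x : G) (N : ℕ) :
    IsKPath K (fun i => f^[i] x) N :=
  fun i _ => by simpa only [Function.iterate_succ_apply'] using hf (f^[i] x)

section nStep

variable [MeasurableSingletonClass G]

lemma nStep_succ_apply (K : G → Measure G) (n : ℕ) (x y : G) :
    nStep K (n + 1) x {y} = ∑' z, K x {z} * nStep K n z {y} := by
  rw [nStep, Measure.sum_apply _ (measurableSet_singleton y)]
  simp only [Measure.smul_apply, smul_eq_mul]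

lemma nStep_succ_ne_zero {u v y : G} {n : ℕ} (huv : K u {v} ≠ 0) (hv : nStep K n v {y} ≠ 0) :
    nStep K (n + 1) u {y} ≠ 0 := by
  rw [nStep_succ_apply]
  exact ((pos_iff_ne_zero.mpr (mul_ne_zero huv hv)).trans_le (ENNReal.le_tsum v)).ne'

lemma exists_isKPath_of_nStep_ne_zero {n : ℕ} {x y : G} (h : nStep K n x {y} ≠ 0) :
    ∃ c, c 0 = x ∧ c n = y ∧ IsKPath K c n := by
  induction n generalizing x with
  | zero =>
    refine ⟨fun _ => x, rfl, ?_, fun i hi => absurd hi (Nat.not_lt_zero i)⟩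
    by_contra hxy
    exact h (by simp [nStep, hxy])
  | succ n ih =>
    rw [nStep_succ_apply] at h
    obtain ⟨z, hz⟩ := not_forall.mp (mt ENNReal.tsum_eq_zero.mpr h)
    obtain ⟨c, rfl, hcn, hc⟩ := ih (right_ne_zero_of_mul hz)
    refine ⟨fun i => Nat.casesOn (motive := fun _ => G) i x c, rfl, hcn, ?_⟩
    rintro (_ | i) hi
    · exact left_ne_zero_of_mul hz
    · exact hc i (by omega)

lemma prod_le_nStep (n : ℕ) (c : ℕ → G) :
    ∏ i ∈ Finset.range n, K (c i) {c (i + 1)} ≤ nStep K n (c 0) {c n} := by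
  induction n generalizing c with
  | zero => simp [nStep]
  | succ n ih =>
    rw [Finset.prod_range_succ', mul_comm, nStep_succ_apply]
    exact (mul_le_mul_right (ih fun i => c (i + 1)) _).trans (ENNReal.le_tsum (c 1))

lemma CycleFree.isKPath_apply_ne (hcf : CycleFree K) {c : ℕ → G} {N : ℕ} (hc : IsKPath K c N)
    (hN : 1 ≤ N) : c N ≠ c 0 := by
  intro h
  have hle := prod_le_nStep (K := K) N c
  rw [h, hcf _ N hN, nonpos_iff_eq_zero, Finset.prod_eq_zero_iff] at hle
  obtain ⟨i, hi, h0⟩ := hle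
  exact hc i (Finset.mem_range.mp hi) h0

lemma IsKPath.injOn (hcf : CycleFree K) {c : ℕ → G} {N : ℕ} (hc : IsKPath K c N) :
    Set.InjOn c (Set.Iic N) := by
  have hlt : ∀ i j, i < j → j ≤ N → c j ≠ c i := by
    intro i j hij hj
    have := hcf.isKPath_apply_ne (c := fun r => c (i + r)) (N := j - i)
      (fun r hr => hc (i + r) (by omega)) (by omega)
    simpa [Nat.add_sub_cancel' hij.le] using this
  intro i hi j hj hij
  rcases lt_trichotomy i j with h | h | h
  · exact absurd hij.symm (hlt i j h hj)
  · exact h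
  · exact absurd hij (hlt j i h hi)

lemma Admissible.iterate_injective (hcf : CycleFree K) {f : G → G} (hf : Admissible K f)
    (x : G) : Function.Injective fun i => f^[i] x :=
  fun i j h => (hf.isKPath_iterate x (max i j)).injOn hcf (le_max_left i j) (le_max_right i j) h

end nStep

lemma Admissible.splice {f : G → G} (hf : Admissible K f) {c : ℕ → G} {N : ℕ}
    (hc : IsKPath K c N) (hinj : Set.InjOn c (Set.Iic N)) : Admissible K (splice c N f) := by
  intro x
  by_cases hx : ∃ j < N, c j = x
  · obtain ⟨j, hj, rfl⟩ := hx
    rw [splice_apply_of_lt hinj f hj]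
    exact hc j hj
  · rw [splice_apply_of_forall_ne f fun j hj h => hx ⟨j, hj, h⟩]
    exact hf x

lemma cmt_cylinder_ne_zero (hμ : IsCMTLaw K μ) {s : Finset G} {F : G → G}
    (hF : ∀ x ∈ s, K x {F x} ≠ 0) : μ {f | ∀ x ∈ s, f x = F x} ≠ 0 := by
  rw [hμ]
  exact Finset.prod_ne_zero_iff.mpr hF

lemma ae_admissible [Countable G] (hμ : IsCMTLaw K μ) : ∀ᵐ f ∂μ, Admissible K f := by
  refine ae_all_iff.mpr fun x => ae_iff.mpr ?_
  have hset : {f : G → G | ¬K x {f x} ≠ 0} = ⋃ y ∈ {y | K x {y} = 0}, {f | f x = y} := by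
    ext f
    simp
  rw [hset, measure_biUnion_null_iff (Set.to_countable _)]
  intro y hy
  have hcyl := hμ {x} fun _ => y
  simp only [Finset.mem_singleton, forall_eq, Finset.prod_singleton] at hcyl
  rw [hcyl]
  exact hy

lemma levelSet_measure_pos_of_iterate_eq (hμ : IsCMTLaw K μ) {F : G → G} (hF : Admissible K F)
    {a b : G} {t : ℕ} (h : F^[t] b = F^[t] a) : 0 < μ {f | b ∈ levelSet f a} := by
  classical
  set s := (Finset.range t).image (F^[·] a) ∪ (Finset.range t).image (F^[·] b)
  refine pos_iff_ne_zero.mpr fun h0 =>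
    cmt_cylinder_ne_zero hμ (s := s) (fun x _ => hF x) (measure_mono_null ?_ h0)
  intro f hf
  have follows : ∀ x, (∀ i < t, F^[i] x ∈ s) → f^[t] x = F^[t] x := fun x hx =>
    iterate_eq_of_apply_eq_succ (c := fun i => F^[i] x)
      (fun j hj => by simp only [hf _ (hx j hj), Function.iterate_succ_apply']) t le_rfl
  refine ⟨t, ?_⟩
  rw [follows b fun i hi => ?_, follows a fun i hi => ?_, h]
  · exact Finset.mem_union_left _ (Finset.mem_image_of_mem _ (Finset.mem_range.mpr hi))
  · exact Finset.mem_union_right _ (Finset.mem_image_of_mem _ (Finset.mem_range.mpr hi))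

lemma exists_ae_iterate_eq_of_isKPath [MeasurableSingletonClass G] (hcf : CycleFree K)
    (hμ : IsCMTLaw K μ) {p : (G → G) → Prop} (hp : ∀ᵐ f ∂μ, p f) {c : ℕ → G} {N : ℕ}
    (hc : IsKPath K c N) : ∃ f, p f ∧ f^[N] (c 0) = c N := by
  classical
  have hinj := hc.injOn hcf
  have hpos : μ {f | ∀ x ∈ (Finset.range N).image c, f x = splice c N id x} ≠ 0 := by
    refine cmt_cylinder_ne_zero hμ fun x hx => ?_
    obtain ⟨j, hj, rfl⟩ := Finset.mem_image.mp hx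
    rw [splice_apply_of_lt hinj id (Finset.mem_range.mp hj)]
    exact hc j (Finset.mem_range.mp hj)
  obtain ⟨f, hf, hpf⟩ := Measure.exists_mem_of_measure_ne_zero_of_ae hpos (ae_restrict_of_ae hp)
  refine ⟨f, hpf, iterate_eq_of_apply_eq_succ (fun j hj => ?_) N le_rfl⟩
  rw [hf (c j) (Finset.mem_image_of_mem c (Finset.mem_range.mpr hj)), splice_apply_of_lt hinj id hj]

lemma levelSet_measure_pos_of_reroute [MeasurableSingletonClass G] (hcf : CycleFree K)
    (hμ : IsCMTLaw K μ) {f : G → G} (hf : Admissible K f) {c : ℕ → G} {N s : ℕ} {u m : G}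
    (hc : IsKPath K c N) (hcN : c N = f^[N] u) (hNs : N ≤ s) (hm : f^[s] m = f^[s] u)
    (hmc : ∀ i < s, ∀ j < N, c j ≠ f^[i] m) : 0 < μ {g | c 0 ∈ levelSet g m} := by
  have hinj := hc.injOn hcf
  have hF : Admissible K (splice c N f) := hf.splice hc hinj
  have hFm : (splice c N f)^[s] m = f^[s] m :=
    iterate_eq_of_apply_eq_succ (c := fun i => f^[i] m) (fun i hi => by
      simp only [splice_apply_of_forall_ne f (hmc i hi), Function.iterate_succ_apply']) s le_rfl
  have hFc : ∀ j ≤ N, (splice c N f)^[j] (c 0) = c j :=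
    iterate_eq_of_apply_eq_succ fun j hj => splice_apply_of_lt hinj f hj
  -- after time `N`, `c 0` follows the orbit of `u`, which cycle-freeness keeps off `c`
  have hFu : ∀ σ, N ≤ σ → σ ≤ s → (splice c N f)^[σ] (c 0) = f^[σ] u := by
    intro σ hNσ
    induction σ, hNσ using Nat.le_induction with
    | base => exact fun _ => by rw [hFc N le_rfl, hcN]
    | succ σ hNσ ih =>
      intro hσs
      have hoff : ∀ j < N, c j ≠ f^[σ] u := fun j hj h => by
        have := hF.iterate_injective hcf (c 0) ((hFc j hj.le).trans (h.trans (ih (by omega)).symm))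
        omega
      rw [Function.iterate_succ_apply', ih (by omega), splice_apply_of_forall_ne f hoff,
        Function.iterate_succ_apply']
  exact levelSet_measure_pos_of_iterate_eq hμ hF (by rw [hFu s hNs le_rfl, hFm, hm])

lemma exists_levelSet_bridge [Countable G] [MeasurableSingletonClass G] (hcf : CycleFree K)
    (hμ : IsCMTLaw K μ)
    {u v y : G} (hreg : ∀ᵐ f ∂μ, (∀ x : G, {y | f y = x}.Finite) ∧ (levelSet f u).Infinite)
    {N : ℕ} (hu : nStep K N u {y} ≠ 0) (hv : nStep K N v {y} ≠ 0) :
    ∃ m, 0 < μ {f | m ∈ levelSet f u} ∧ 0 < μ {f | v ∈ levelSet f m} := by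
  classical
  obtain ⟨d, rfl, rfl, hd⟩ := exists_isKPath_of_nStep_ne_zero hu
  obtain ⟨c, rfl, hcN, hc⟩ := exists_isKPath_of_nStep_ne_zero hv
  obtain ⟨f, ⟨⟨hfin, hL⟩, hf⟩, hfN⟩ :=
    exists_ae_iterate_eq_of_isKPath hcf hμ (hreg.and (ae_admissible hμ)) hd
  obtain ⟨m, s, hNs, hm, hmc⟩ := exists_merging_avoiding hfin hL
    (hf.iterate_injective hcf (d 0)) ((Finset.range N).image c).finite_toSet N
  refine ⟨m, levelSet_measure_pos_of_iterate_eq hμ hf hm,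
    levelSet_measure_pos_of_reroute hcf hμ hf hc (hcN.trans hfN.symm) hNs hm
      fun i hi j hj h => hmc i hi ?_⟩
  rw [← h]
  exact Finset.mem_image_of_mem c (Finset.mem_range.mpr hj)

end LevelSetGraph

theorem levelset_graph_connected_general
    [Countable G] [MeasurableSpace G] [MeasurableSingletonClass G]
    (K : G → Measure G) (hcf : CycleFree K)
    (hirr : ∀ u v : G, Relation.ReflTransGen (fun a b => 0 < K a {b} + K b {a}) u v)
    (haper : ∀ u : G, ∀ d₀ : ℕ, 1 ≤ d₀ → ∃ n : ℕ, 1 ≤ n ∧ ∃ y : G,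
      0 < nStep K n u {y} ∧ 0 < nStep K (n + d₀) u {y})
    (μ : Measure (G → G)) (hμ : IsCMTLaw K μ)
    (hreg : ∀ᵐ f ∂μ, (∀ x : G, {y | f y = x}.Finite) ∧ ∀ v : G, (levelSet f v).Infinite) :
    ∀ u v : G, Relation.ReflTransGen (fun a b => 0 < μ {f | b ∈ levelSet f a}) u v := by
  have hsymm : ∀ a b : G, 0 < μ {f | b ∈ levelSet f a} → 0 < μ {f | a ∈ levelSet f b} :=
    fun a b h => by simpa only [mem_levelSet_comm] using h
  have hbridge : ∀ a b : G, K a {b} ≠ 0 →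
      ∃ m, 0 < μ {f | m ∈ levelSet f a} ∧ 0 < μ {f | b ∈ levelSet f m} := by
    intro a b hab
    obtain ⟨n, -, y, hn, hn1⟩ := haper b 1 le_rfl
    exact exists_levelSet_bridge hcf hμ (hreg.mono fun f hf => ⟨hf.1, hf.2 a⟩) (nStep_succ_ne_zero hab hn.ne') hn1.ne'
  intro u v
  induction hirr u v with
  | refl => exact .refl
  | tail _ hab ih =>
    refine ih.trans ?_
    rcases add_pos_iff.mp hab with h | h
    · obtain ⟨m, ham, hmb⟩ := hbridge _ _ h.ne'
      exact .tail (.single ham) hmb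
    · obtain ⟨m, hbm, hma⟩ := hbridge _ _ h.ne'
      exact .tail (.single (hsymm _ _ hma)) (hsymm _ _ hbm)

/-- Under weak irreducibility, the strengthened weak aperiodicity condition
and a.s. local finiteness with infinite level sets, the graph with an edge between `u` and
`v` whenever `ℙ_G(v ∈ L_F(u)) > 0` is connected. -/
theorem levelset_graph_connected
    [Countable G] [MeasurableSpace G] [MeasurableSingletonClass G]
    (K : G → Measure G) (hK : ∀ x, IsProbabilityMeasure (K x)) (hcf : CycleFree K)
    (hirr : ∀ u v : G, Relation.ReflTransGen (fun a b => 0 < K a {b} + K b {a}) u v)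
    (haper : ∀ u : G, ∀ d₀ : ℕ, 1 ≤ d₀ → ∃ n : ℕ, 1 ≤ n ∧ ∃ y : G,
      0 < nStep K n u {y} ∧ 0 < nStep K (n + d₀) u {y})
    (μ : Measure (G → G)) [IsProbabilityMeasure μ] (hμ : IsCMTLaw K μ)
    (hreg : ∀ᵐ f ∂μ, (∀ x : G, {y | f y = x}.Finite) ∧ ∀ v : G, (levelSet f v).Infinite) :
    ∀ u v : G, Relation.ReflTransGen (fun a b => 0 < μ {f | b ∈ levelSet f a}) u v :=
  levelset_graph_connected_general K hcf hirr haper μ hμ hreg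

end CMTPaper
end
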